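/- Let G be a finite connected simple graph on n ≥ 2 vertices with adjacency matrix A_G, all degrees d_i > 0, normalized adjacency Â = D^{-1/2} A_G D^{-1/2}, and normalized Laplacian Δ = I − Â with eigenvalues 0 = λ₀ ≤ λ₁ ≤ … ≤ λ_{n−1}. Let W ∈ ℝ^{d×d} be symmetric with eigenvalues μ₀ ≤ μ₁ ≤ … ≤ μ_{d−1}, and suppose |μ₀| (λ_{n−1} − 1) < μ_{d−1}. Then for (Lebesgue) almost every initial condition F₀ ∈ ℝ^{n×d} with F₀ ≠ 0, the solution F : [0, ∞) → ℝ^{n×d} of the linear matrix ODE Ḟ(t) = Â F(t) W with F(0) = F₀ satisfies: F(t) ≠ 0 for all t, and the normalized Dirichlet energy trace(F(t)ᵀ Δ F(t)) / ‖F(t)‖_F² converges to λ₀ = 0 as t → ∞ (i.e., the dynamics is Low-Frequency-Dominant). -/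

import Mathlib

/-!
Conjugating by the orthogonal eigenbases decouples the equation: `H = Qᵀ F P` satisfies
`Ḣᵢⱼ = (1 - λᵢ) μⱼ Hᵢⱼ`, so `Hᵢⱼ(t) = e^{(1 - λᵢ) μⱼ t} Hᵢⱼ(0)`, and for almost every `F₀` no
`Hᵢⱼ(0)` vanishes, the exceptional set being a finite union of hyperplanes. Since the diagonal of
`Â` vanishes, `∑ λᵢ = trace Δ = n`, so `λ_{n-1} ≥ 1`; the hypothesis then makes `μ_{d-1}` the
largest rate, attained at `λ₀ = 0`, while every mode with `λᵢ ≠ 0` grows strictly slower. The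
Dirichlet energy `∑ λᵢ Hᵢⱼ² / ∑ Hᵢⱼ²` is therefore a ratio in which the numerator is negligible
against the single dominant term of the denominator.
-/

open Matrix MeasureTheory Filter

attribute [local instance] Matrix.normedAddCommGroup Matrix.normedSpace

theorem MeasureTheory.ae_ne_zero_of_linearMap {E : Type*} [NormedAddCommGroup E]
    [NormedSpace ℝ E] [MeasurableSpace E] [BorelSpace E] [FiniteDimensional ℝ E] (μ : Measure E)
    [μ.IsAddHaarMeasure] (L : E →ₗ[ℝ] ℝ) {x : E} (hx : L x ≠ 0) : ∀ᵐ y ∂μ, L y ≠ 0 := by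
  have hker : LinearMap.ker L ≠ ⊤ := fun h => hx (LinearMap.ker_eq_top.mp h ▸ rfl)
  rw [ae_iff]
  simp only [ne_eq, not_not]
  exact Measure.addHaar_submodule μ _ hker

theorem eq_exp_mul_of_hasDerivWithinAt {g : ℝ → ℝ} {c : ℝ}
    (hg : ∀ t, 0 ≤ t → HasDerivWithinAt g (c * g t) (Set.Ici 0) t) {t : ℝ} (ht : 0 ≤ t) :
    g t = Real.exp (c * t) * g 0 := by
  have hderiv : ∀ s ∈ Set.Ici (0 : ℝ),
      HasDerivWithinAt (fun s => Real.exp (-(c * s)) * g s) 0 (Set.Ici 0) s := by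
    intro s hs
    have hexp : HasDerivAt (fun s => Real.exp (-(c * s))) (Real.exp (-(c * s)) * -c) s := by
      simpa using ((hasDerivAt_id s).const_mul c).neg.exp
    have := hexp.hasDerivWithinAt.mul (hg s hs)
    rwa [show Real.exp (-(c * s)) * -c * g s + Real.exp (-(c * s)) * (c * g s) = 0 by ring]
      at this
  have hconst : Real.exp (-(c * t)) * g t = Real.exp (-(c * 0)) * g 0 := by
    simpa [sub_eq_zero] using Convex.norm_image_sub_le_of_norm_hasDerivWithin_le hderiv
      (fun _ _ => norm_zero.le) (convex_Ici 0) Set.self_mem_Ici (Set.mem_Ici.mpr ht)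
  rw [mul_zero, neg_zero, Real.exp_zero, one_mul, Real.exp_neg] at hconst
  rw [← hconst, ← mul_assoc, mul_inv_cancel₀ (Real.exp_pos _).ne', one_mul]

theorem tendsto_sum_mul_exp_div_sum_exp {ι : Type*} [Fintype ι] {w c r : ι → ℝ} {i₀ : ι}
    (hc : ∀ i, 0 ≤ c i) (hci₀ : 0 < c i₀) (hw : ∀ i, w i ≠ 0 → r i < r i₀) :
    Tendsto (fun t => (∑ i, w i * (c i * Real.exp (r i * t))) / ∑ i, c i * Real.exp (r i * t))
      atTop (nhds 0) := by
  set N := fun t => ∑ i, w i * (c i * Real.exp ((r i - r i₀) * t))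
  set D := fun t => ∑ i, c i * Real.exp ((r i - r i₀) * t)
  have hratio : ∀ t, N t / D t
      = (∑ i, w i * (c i * Real.exp (r i * t))) / ∑ i, c i * Real.exp (r i * t) := by
    intro t
    have hexp : ∀ i, (r i - r i₀) * t + r i₀ * t = r i * t := fun i => by ring
    rw [← mul_div_mul_right (N t) (D t) (Real.exp_pos (r i₀ * t)).ne']
    simp only [N, D, Finset.sum_mul, mul_assoc, ← Real.exp_add, hexp]
  have hN : Tendsto N atTop (nhds 0) := by
    rw [show (0 : ℝ) = ∑ i : ι, w i * (c i * 0) by simp]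
    refine tendsto_finsetSum _ fun i _ => ?_
    by_cases hwi : w i = 0
    · simp [hwi]
    refine ((Real.tendsto_exp_atBot.comp ?_).const_mul (c i)).const_mul (w i)
    exact tendsto_id.const_mul_atTop_of_neg (by linarith [hw i hwi])
  have hD : ∀ t, c i₀ ≤ D t := fun t => by
    simpa only [sub_self, zero_mul, Real.exp_zero, mul_one] using
      Finset.single_le_sum (fun i _ => mul_nonneg (hc i) (Real.exp_pos _).le)
        (Finset.mem_univ i₀) (f := fun i => c i * Real.exp ((r i - r i₀) * t))
  simp only [← hratio]
  refine squeeze_zero_norm (fun t => ?_) ((hN.norm.div_const (c i₀)).trans (by simp))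
  rw [norm_div, Real.norm_of_nonneg (hci₀.le.trans (hD t))]
  exact div_le_div_of_nonneg_left (norm_nonneg _) hci₀ (hD t)

theorem one_sub_mul_lt_of_abs_mul_sub_one_lt {a A b m M : ℝ} (ha : 0 < a) (haA : a ≤ A)
    (hA : 1 ≤ A) (hmb : m ≤ b) (hbM : b ≤ M) (h : |m| * (A - 1) < M) : (1 - a) * b < M := by
  have hM : 0 < M := (mul_nonneg (abs_nonneg m) (by linarith)).trans_lt h
  rcases lt_trichotomy b 0 with hb | rfl | hb
  · have hm : |m| = -m := abs_of_neg (hmb.trans_lt hb)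
    nlinarith
  · simpa using hM
  · nlinarith [mul_pos ha hb]

theorem Monotone.one_le_of_sum_eq_card {n : ℕ} {lam : Fin n → ℝ} (hlam : Monotone lam)
    (hsum : ∑ i, lam i = n) (hn : 0 < n) : 1 ≤ lam ⟨n - 1, Nat.sub_one_lt_of_lt hn⟩ := by
  obtain ⟨i, -, hi⟩ := Finset.exists_le_of_sum_le ⟨⟨0, hn⟩, Finset.mem_univ _⟩
    (f := fun _ => (1 : ℝ)) (g := lam) (by simp [hsum])
  exact hi.trans (hlam (Fin.le_iff_val_le_val.mpr (Nat.le_sub_one_of_lt i.isLt)))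

theorem one_sub_mul_lt_of_monotone {n d : ℕ} {lam : Fin n → ℝ} {mu : Fin d → ℝ}
    (hlam : Monotone lam) (hmu : Monotone mu) (hn : 0 < n) (hd : 0 < d) (hlam0 : lam ⟨0, hn⟩ = 0)
    (hsum : ∑ i, lam i = n)
    (hcond : |mu ⟨0, hd⟩| * (lam ⟨n - 1, Nat.sub_one_lt_of_lt hn⟩ - 1) <
      mu ⟨d - 1, Nat.sub_one_lt_of_lt hd⟩)
    {i : Fin n} (hi : lam i ≠ 0) (j : Fin d) :
    (1 - lam i) * mu j < mu ⟨d - 1, Nat.sub_one_lt_of_lt hd⟩ := by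
  have hlam_nonneg : 0 ≤ lam i := hlam0 ▸ hlam (Fin.le_iff_val_le_val.mpr (Nat.zero_le _))
  exact one_sub_mul_lt_of_abs_mul_sub_one_lt (hlam_nonneg.lt_of_ne' hi)
    (hlam (Fin.le_iff_val_le_val.mpr (Nat.le_sub_one_of_lt i.isLt)))
    (hlam.one_le_of_sum_eq_card hsum hn) (hmu (Fin.le_iff_val_le_val.mpr (Nat.zero_le _)))
    (hmu (Fin.le_iff_val_le_val.mpr (Nat.le_sub_one_of_lt j.isLt))) hcond

section MatrixAlgebra

variable {m k V R : Type*} [Fintype m] [Fintype k] [CommRing R]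

theorem Matrix.transpose_mul_mul_mul_eq [DecidableEq m] [DecidableEq k] {Q : Matrix m m R}
    {P : Matrix k k R} (hQ : Q * Qᵀ = 1) (hP : P * Pᵀ = 1) (A : Matrix m m R) (F : Matrix m k R)
    (W : Matrix k k R) :
    Qᵀ * (A * F * W) * P = (Qᵀ * A * Q) * (Qᵀ * F * P) * (Pᵀ * W * P) := by
  calc Qᵀ * (A * F * W) * P = Qᵀ * A * (Q * Qᵀ) * F * (P * Pᵀ) * W * P := by
        rw [hQ, hP, Matrix.mul_one, Matrix.mul_one]; simp only [Matrix.mul_assoc]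
    _ = _ := by simp only [Matrix.mul_assoc]

theorem Matrix.transpose_mul_conj_mul_eq [DecidableEq m] {Q : Matrix m m R} (hQ : Qᵀ * Q = 1)
    (M : Matrix m m R) : Qᵀ * (Q * M * Qᵀ) * Q = M := by
  calc Qᵀ * (Q * M * Qᵀ) * Q = (Qᵀ * Q) * M * (Qᵀ * Q) := by simp only [Matrix.mul_assoc]
    _ = M := by rw [hQ, Matrix.one_mul, Matrix.mul_one]

theorem Matrix.trace_transpose_mul_diagonal_mul [DecidableEq m] (H : Matrix m k R)
    (l : m → R) : (Hᵀ * diagonal l * H).trace = ∑ i, ∑ j, l i * H i j ^ 2 := by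
  simp only [trace, diag_apply, mul_apply, transpose_apply, diagonal_apply, mul_ite, mul_zero,
    Finset.sum_ite_eq', Finset.mem_univ, if_true]
  rw [Finset.sum_comm]
  exact Finset.sum_congr rfl fun i _ => Finset.sum_congr rfl fun j _ => by ring

theorem Matrix.trace_conj_transpose_mul_mul [DecidableEq k] {P : Matrix k k R} (hP : P * Pᵀ = 1)
    (Q M : Matrix m m R) (F : Matrix m k R) :
    ((Qᵀ * F * P)ᵀ * M * (Qᵀ * F * P)).trace = (Fᵀ * (Q * M * Qᵀ) * F).trace := by
  calc ((Qᵀ * F * P)ᵀ * M * (Qᵀ * F * P)).trace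
      = (Pᵀ * (Fᵀ * (Q * M * Qᵀ) * F * P)).trace := by
        simp only [transpose_mul, transpose_transpose, Matrix.mul_assoc]
    _ = (Fᵀ * (Q * M * Qᵀ) * F * (P * Pᵀ)).trace := by
        rw [trace_mul_comm, Matrix.mul_assoc _ P]
    _ = _ := by rw [hP, Matrix.mul_one]

theorem Matrix.trace_transpose_mul_conj_diagonal_mul [DecidableEq m] [DecidableEq k]
    {P : Matrix k k R} (hP : P * Pᵀ = 1) (Q : Matrix m m R) (F : Matrix m k R) (l : m → R) :
    (Fᵀ * (Q * diagonal l * Qᵀ) * F).trace = ∑ i, ∑ j, l i * (Qᵀ * F * P) i j ^ 2 := by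
  rw [← trace_conj_transpose_mul_mul hP, trace_transpose_mul_diagonal_mul]

theorem Matrix.sum_sq_conj_apply [DecidableEq m] [DecidableEq k] {Q : Matrix m m R}
    {P : Matrix k k R} (hQ : Q * Qᵀ = 1) (hP : P * Pᵀ = 1) (F : Matrix m k R) :
    ∑ i, ∑ j, (Qᵀ * F * P) i j ^ 2 = ∑ i, ∑ j, F i j ^ 2 := by
  have h := trace_transpose_mul_conj_diagonal_mul hP Q F fun _ => 1
  have h1 := trace_transpose_mul_diagonal_mul F fun _ => 1
  simp only [diagonal_one, Matrix.mul_one, hQ, one_mul] at h h1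
  rw [← h, h1]

theorem SimpleGraph.trace_diagonal_mul_adjMatrix_mul_diagonal [Fintype V] [DecidableEq V]
    (G : SimpleGraph V) [DecidableRel G.Adj] (s s' : V → R) :
    (diagonal s * G.adjMatrix R * diagonal s').trace = 0 := by
  simp only [trace, diag_apply, mul_diagonal, diagonal_mul, adjMatrix_apply, SimpleGraph.irrefl,
    if_false, mul_zero, zero_mul, Finset.sum_const_zero]

end MatrixAlgebra

section MatrixODE

variable {m k m' k' : Type*} [Fintype m] [Fintype k] [Fintype m'] [Fintype k']

theorem HasDerivWithinAt.matrix_const_mul_mul_const {F : ℝ → Matrix m k ℝ} {F' : Matrix m k ℝ}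
    {s : Set ℝ} {t : ℝ} (hF : HasDerivWithinAt F F' s t) (A : Matrix m' m ℝ) (B : Matrix k k' ℝ) :
    HasDerivWithinAt (fun t => A * F t * B) (A * F' * B) s t := by
  let L : Matrix m k ℝ →L[ℝ] Matrix m' k' ℝ :=
    (mulRightLinearMap m' ℝ B ∘ₗ mulLeftLinearMap k ℝ A).toContinuousLinearMap
  exact L.hasFDerivAt.comp_hasDerivWithinAt t hF

theorem Matrix.tendsto_sum_mul_sq_div_sum_sq_of_apply_eq_exp_mul {H : ℝ → Matrix m k ℝ}
    {l : m → ℝ} {a : m → k → ℝ}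
    (hH : ∀ t, 0 ≤ t → ∀ i j, H t i j = Real.exp (a i j * t) * H 0 i j)
    (hH0 : ∀ i j, H 0 i j ≠ 0) {i₀ : m} {j₀ : k} (hl : ∀ i j, l i ≠ 0 → a i j < a i₀ j₀) :
    Tendsto (fun t => (∑ i, ∑ j, l i * H t i j ^ 2) / ∑ i, ∑ j, H t i j ^ 2) atTop (nhds 0) := by
  refine (tendsto_sum_mul_exp_div_sum_exp (ι := m × k) (w := fun p => l p.1)
    (c := fun p => H 0 p.1 p.2 ^ 2) (r := fun p => 2 * a p.1 p.2) (i₀ := (i₀, j₀))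
    (fun _ => sq_nonneg _) (sq_pos_of_ne_zero (hH0 _ _))
    fun p hp => by linarith [hl p.1 p.2 hp]).congr' ?_
  filter_upwards [eventually_ge_atTop 0] with t ht
  have hsq : ∀ i j, H 0 i j ^ 2 * Real.exp (2 * a i j * t) = H t i j ^ 2 := fun i j => by
    rw [hH t ht, mul_pow, ← Real.exp_nat_mul]
    push_cast
    ring_nf
  simp only [Fintype.sum_prod_type, hsq]

variable [DecidableEq m] [DecidableEq k]

theorem Matrix.apply_eq_exp_mul_of_hasDerivWithinAt_diagonal {H : ℝ → Matrix m k ℝ}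
    {a : m → ℝ} {b : k → ℝ}
    (hH : ∀ t, 0 ≤ t → HasDerivWithinAt H (diagonal a * H t * diagonal b) (Set.Ici 0) t)
    {t : ℝ} (ht : 0 ≤ t) (i : m) (j : k) : H t i j = Real.exp (a i * b j * t) * H 0 i j := by
  refine eq_exp_mul_of_hasDerivWithinAt (g := fun t => H t i j) (fun s hs => ?_) ht
  have := hasDerivWithinAt_pi.mp (hasDerivWithinAt_pi.mp (hH s hs) i) j
  simpa only [mul_diagonal, diagonal_mul, mul_right_comm] using this

theorem Matrix.conj_apply_eq_exp_mul_of_hasDerivWithinAt {Q : Matrix m m ℝ} {P : Matrix k k ℝ}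
    (hQl : Qᵀ * Q = 1) (hQr : Q * Qᵀ = 1) (hPl : Pᵀ * P = 1) (hPr : P * Pᵀ = 1)
    {a : m → ℝ} {b : k → ℝ} {F : ℝ → Matrix m k ℝ}
    (hF : ∀ t, 0 ≤ t → HasDerivWithinAt F
      (Q * diagonal a * Qᵀ * F t * (P * diagonal b * Pᵀ)) (Set.Ici 0) t)
    (t : ℝ) (ht : 0 ≤ t) (i : m) (j : k) :
    (Qᵀ * F t * P) i j = Real.exp (a i * b j * t) * (Qᵀ * F 0 * P) i j := by
  refine apply_eq_exp_mul_of_hasDerivWithinAt_diagonal (H := fun t => Qᵀ * F t * P)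
    (fun s hs => ?_) ht i j
  simpa only [transpose_mul_mul_mul_eq hQr hPr, transpose_mul_conj_mul_eq hQl,
    transpose_mul_conj_mul_eq hPl] using (hF s hs).matrix_const_mul_mul_const Qᵀ P

theorem Matrix.ae_conj_apply_ne_zero {Q : Matrix m m ℝ} {P : Matrix k k ℝ} (hQ : Qᵀ * Q = 1)
    (hP : Pᵀ * P = 1) : ∀ᵐ f : m → k → ℝ, ∀ i j, (Qᵀ * of f * P) i j ≠ 0 := by
  simp only [ae_all_iff]
  intro i j
  let L : (m → k → ℝ) →ₗ[ℝ] ℝ := entryLinearMap ℝ ℝ i j ∘ₗ mulRightLinearMap m ℝ P ∘ₗ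
    mulLeftLinearMap k ℝ Qᵀ ∘ₗ (ofLinearEquiv ℝ).toLinearMap
  have hL : L (Q * single i j (1 : ℝ) * Pᵀ) = 1 := by
    change (Qᵀ * (Q * single i j (1 : ℝ) * Pᵀ) * P) i j = 1
    simp only [← Matrix.mul_assoc, hQ, Matrix.one_mul]
    simp [Matrix.mul_assoc, hP]
  exact ae_ne_zero_of_linearMap volume L (hL.trans_ne one_ne_zero)

end MatrixODE

/-- **Low-Frequency-Dominant dynamics (Theorem 4.3 of Di Giovanni et al., LFD case).**
Let `G` be a connected finite simple graph on `n ≥ 2` vertices with positive degrees,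
normalized adjacency `Â = D^{-1/2} A D^{-1/2}` and normalized Laplacian `Δ = I − Â`
with ordered eigenvalues `0 = λ₀ ≤ … ≤ λ_{n−1}` (spectral decomposition `Δ = Q Λ Qᵀ`),
and let `W` be symmetric with ordered eigenvalues `μ₀ ≤ … ≤ μ_{d−1}`
(spectral decomposition `W = P M Pᵀ`). If `|μ₀| (λ_{n−1} − 1) < μ_{d−1}`, then for
Lebesgue-almost every nonzero initial condition `F₀`, any solution of `Ḟ = Â F W` on
`[0,∞)` with `F(0) = F₀` never vanishes and its normalized Dirichlet energy
`trace(Fᵀ Δ F)/‖F‖_F²` converges to `λ₀ = 0`: the dynamics is LFD. -/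
theorem lfd_dynamics {n d : ℕ} (hn : 2 ≤ n) (hd : 0 < d)
    (G : SimpleGraph (Fin n)) [DecidableRel G.Adj]
    (Ahat Δ : Matrix (Fin n) (Fin n) ℝ)
    (hAhat : Ahat =
      Matrix.diagonal (fun i => (Real.sqrt (G.degree i))⁻¹) * G.adjMatrix ℝ *
        Matrix.diagonal (fun i => (Real.sqrt (G.degree i))⁻¹))
    (hΔ : Δ = 1 - Ahat)
    (lam : Fin n → ℝ) (hlam_mono : Monotone lam) (hlam0 : lam ⟨0, by omega⟩ = 0)
    (Q : Matrix (Fin n) (Fin n) ℝ) (hQorth : Qᵀ * Q = 1 ∧ Q * Qᵀ = 1)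
    (hΔspec : Δ = Q * Matrix.diagonal lam * Qᵀ)
    (W : Matrix (Fin d) (Fin d) ℝ)
    (mu : Fin d → ℝ) (hmu_mono : Monotone mu)
    (P : Matrix (Fin d) (Fin d) ℝ) (hPorth : Pᵀ * P = 1 ∧ P * Pᵀ = 1)
    (hWspec : W = P * Matrix.diagonal mu * Pᵀ)
    (hcond : |mu ⟨0, hd⟩| * (lam ⟨n - 1, by omega⟩ - 1) < mu ⟨d - 1, by omega⟩) :
    ∀ᵐ f : Fin n → Fin d → ℝ,
      Matrix.of f ≠ 0 →
      ∀ F : ℝ → Matrix (Fin n) (Fin d) ℝ,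
        F 0 = Matrix.of f →
        (∀ t : ℝ, 0 ≤ t → HasDerivWithinAt F (Ahat * F t * W) (Set.Ici 0) t) →
        (∀ t : ℝ, 0 ≤ t → F t ≠ 0) ∧
        Tendsto
          (fun t : ℝ => ((F t)ᵀ * Δ * F t).trace / ∑ i : Fin n, ∑ j : Fin d, (F t i j) ^ 2)
          atTop (nhds (lam ⟨0, by omega⟩)) := by
  obtain ⟨hQl, hQr⟩ := hQorth
  obtain ⟨hPl, hPr⟩ := hPorth
  have hsum : ∑ i, lam i = n := by
    rw [← trace_diagonal, ← Matrix.one_mul (diagonal lam), ← hQl, Matrix.mul_assoc,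
      trace_mul_comm, ← hΔspec, hΔ, trace_sub, hAhat,
      SimpleGraph.trace_diagonal_mul_adjMatrix_mul_diagonal]
    simp
  have hAspec : Ahat = Q * diagonal (fun i => 1 - lam i) * Qᵀ := by
    rw [← diagonal_sub, diagonal_one, Matrix.mul_sub, Matrix.sub_mul, Matrix.mul_one, hQr,
      ← hΔspec, hΔ, sub_sub_cancel]
  filter_upwards [ae_conj_apply_ne_zero hQl hPl] with f hf _ F hF0 hF
  simp only [hAspec, hWspec] at hF
  have hH := conj_apply_eq_exp_mul_of_hasDerivWithinAt hQl hQr hPl hPr hF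
  have hH0 : ∀ i j, (Qᵀ * F 0 * P) i j ≠ 0 := hF0 ▸ hf
  refine ⟨fun t ht hFt => hH0 ⟨0, by omega⟩ ⟨0, hd⟩ ?_, ?_⟩
  · simpa [hFt] using (hH t ht ⟨0, by omega⟩ ⟨0, hd⟩).symm
  rw [hlam0]
  refine (tendsto_sum_mul_sq_div_sum_sq_of_apply_eq_exp_mul (H := fun t => Qᵀ * F t * P)
    (a := fun i j => (1 - lam i) * mu j) (l := lam) hH hH0
    (i₀ := ⟨0, by omega⟩) (j₀ := ⟨d - 1, by omega⟩) fun i j hi => ?_).congr' ?_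
  · simpa [hlam0] using
      one_sub_mul_lt_of_monotone hlam_mono hmu_mono (by omega) hd hlam0 hsum hcond hi j
  refine Eventually.of_forall fun t => ?_
  dsimp only
  rw [hΔspec, trace_transpose_mul_conj_diagonal_mul hPr, sum_sq_conj_apply hQr hPr]
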